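/- Let G and H be groups with symmetric generating sets X and Y respectively, Λ and Γ finite alphabets, and C a class of formal languages closed under intersection with regular languages, finite intersection and inverse homomorphism. If (G,X,Λ) and (H,Y,Γ) are C-graph automatic, then the direct product G×H is C-graph automatic with respect to the generating set Z = {(x,1_H) : x ∈ X} ∪ {(1_G,y) : y ∈ Y} and the alphabet (Λ∪{⋄})×(Γ∪{⋄}), with normal form language ⊗(L_G, L_H) where L_G and L_H are the normal forms for G and H. -/

import Mathlib

/-- The convolution of two words `u ∈ A*`, `v ∈ B*`: the word of length
`max |u| |v|` over `Option A × Option B` (with `none` playing the role of the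
padding symbol ⋄) whose `i`-th letter is the pair of the `i`-th letters of `u`
and `v`, padded with `none`. -/
def conv {A B : Type} (u : List A) (v : List B) : List (Option A × Option B) :=
  (List.range (max u.length v.length)).map fun i => (u[i]?, v[i]?)

/-- The multiplier language `L_x` of a normal form `nf : L → G` for the
group element `x`: all convolutions `⊗(u,v)` with `u, v ∈ L` and `ū x = v̄`. -/
def Mult {Λ G : Type} [Group G] (nf : List Λ → G) (L : Language Λ) (x : G) :
    Language (Option Λ × Option Λ) :=
  { w | ∃ u ∈ L, ∃ v ∈ L, nf u * x = nf v ∧ w = conv u v }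

/-- The word length (geodesic length) `‖g‖_X` of `g` with respect to a generating set
`X ⊆ G`: the minimal length of a word over `X` whose product is `g`. -/
noncomputable def wordLength {G : Type} [Group G] (X : Set G) (g : G) : ℕ :=
  sInf { n | ∃ w : List G, (∀ a ∈ w, a ∈ X) ∧ w.length = n ∧ w.prod = g }

/-- A language is regular if it is accepted by a deterministic finite automaton
with finitely many states. -/
def IsRegLang {α : Type} (L : Language α) : Prop :=
  ∃ (σ : Type) (_ : Fintype σ) (M : DFA α σ), M.accepts = L

/-- A class of formal languages: an assignment of a set of languages to each alphabet. -/
def LangClass : Type 1 := (α : Type) → Set (Language α)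

/-- The image of a language under the monoid homomorphism `α* → β*` induced by
`f : α → List β`. -/
def homImage {α β : Type} (f : α → List β) (L : Language α) : Language β :=
  { w | ∃ u ∈ L, w = (u.map f).flatten }

/-- The preimage of a language under the monoid homomorphism `α* → β*` induced by
`f : α → List β`. -/
def homPreimage {α β : Type} (f : α → List β) (L : Language β) : Language α :=
  { u | (u.map f).flatten ∈ L }

/-- `C` is closed under homomorphism. -/
def ClosedUnderHom (C : LangClass) : Prop :=
  ∀ (α β : Type) [Fintype α] [Fintype β], ∀ L ∈ C α, ∀ f : α → List β, homImage f L ∈ C β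

/-- `C` is closed under ε-free homomorphism. -/
def ClosedUnderEpsFreeHom (C : LangClass) : Prop :=
  ∀ (α β : Type) [Fintype α] [Fintype β], ∀ L ∈ C α, ∀ f : α → List β,
    (∀ a, f a ≠ []) → homImage f L ∈ C β

/-- `C` is closed under inverse homomorphism. -/
def ClosedUnderInvHom (C : LangClass) : Prop :=
  ∀ (α β : Type) [Fintype α] [Fintype β], ∀ L ∈ C β, ∀ f : α → List β, homPreimage f L ∈ C α

/-- `C` is closed under (finite) intersection. -/
def ClosedUnderInter (C : LangClass) : Prop :=
  ∀ (α : Type) [Fintype α], ∀ L₁ ∈ C α, ∀ L₂ ∈ C α, L₁ ⊓ L₂ ∈ C α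

/-- `C` is closed under intersection with regular languages. -/
def ClosedUnderInterReg (C : LangClass) : Prop :=
  ∀ (α : Type) [Fintype α], ∀ L ∈ C α, ∀ R : Language α, IsRegLang R → L ⊓ R ∈ C α

/-- `C` contains all regular languages. -/
def ContainsRegular (C : LangClass) : Prop :=
  ∀ (α : Type) [Fintype α], ∀ L : Language α, IsRegLang L → L ∈ C α

/-- `(G,X,Λ)` is `C`-graph automatic via the normal form `L ⊆ Λ*` with bijection
`nf : L → G`: `L ∈ C`, `nf` restricted to `L` is a bijection onto `G`, and every
multiplier language `L_x`, `x ∈ X`, is in `C`. -/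
def CGraphAutoWith (C : LangClass) {G : Type} [Group G] (X : Set G) {Λ : Type} [Fintype Λ]
    (L : Language Λ) (nf : List Λ → G) : Prop :=
  Set.BijOn nf L Set.univ ∧ L ∈ C Λ ∧ ∀ x ∈ X, Mult nf L x ∈ C (Option Λ × Option Λ)

/-- The convolution of two languages: `⊗(L₁,L₂) = {⊗(u,v) : u ∈ L₁, v ∈ L₂}`. -/
def convLang {A B : Type} (L₁ : Language A) (L₂ : Language B) :
    Language (Option A × Option B) :=
  { w | ∃ u ∈ L₁, ∃ v ∈ L₂, w = conv u v }

/-!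
Erasing the padding symbols from one track of a convolution is a homomorphism of free monoids,
so `⊗(L_G, L_H)` is the intersection of the inverse images of `L_G` and `L_H` with the regular
language of all convolutions. For a generator `(x, 1)`, a word `⊗(⊗(u₁, v₁), ⊗(u₂, v₂))` of
convolutions lies in the multiplier language exactly when `⊗(u₁, u₂) ∈ L_x`, `v₁ ∈ L_H` and
`v₁ = v₂`: the first word is again the image of a homomorphism, and `v₁ = v₂` is a letterwise,
hence regular, condition. Generators `(1, y)` reduce to this case by swapping the factors.
The auxiliary languages are cut out by pairwise and letterwise conditions on letters, so they
are regular by Myhill–Nerode: the left quotient by a word only depends on whether the word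
satisfies the conditions and on its set of letters.
-/

namespace List

variable {α β : Type*}

theorem getElem?_filterMap_of_pairwise {f : α → Option β} {w : List α}
    (hw : w.Pairwise fun a b => (f b).isSome → (f a).isSome) (i : ℕ) :
    (w.filterMap f)[i]? = w[i]?.bind f := by
  induction w generalizing i with
  | nil => simp
  | cons a w ih =>
    rw [pairwise_cons] at hw
    cases ha : f a with
    | some b =>
      cases i with
      | zero => simp [ha]
      | succ i => simp [ha, ih hw.2]
    | none =>
      have hnone : ∀ b ∈ w, f b = none := fun b hb =>
        Option.not_isSome_iff_eq_none.1 fun h => by simpa [ha] using hw.1 b hb h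
      rw [filterMap_cons_none ha, filterMap_eq_nil_iff.2 hnone]
      cases i with
      | zero => simp [ha]
      | succ i =>
        cases hb : w[i]? with
        | none => simp [hb]
        | some b => simp [hb, hnone b (mem_of_getElem? hb)]

theorem pairwise_of_getElem?_bind_eq {f : α → Option β} {w : List α} {u : List β}
    (h : ∀ i : ℕ, w[i]?.bind f = u[i]?) :
    w.Pairwise fun a b => (f b).isSome → (f a).isSome := by
  rw [pairwise_iff_getElem]
  intro i j hi hj hij hfj
  have hui := h i
  have huj := h j
  rw [getElem?_eq_getElem hi, Option.bind_some] at hui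
  rw [getElem?_eq_getElem hj, Option.bind_some] at huj
  rw [hui, isSome_getElem?]
  rw [huj, isSome_getElem?] at hfj
  omega

theorem filterMap_eq_of_getElem?_bind_eq {f : α → Option β} {w : List α} {u : List β}
    (h : ∀ i : ℕ, w[i]?.bind f = u[i]?) : w.filterMap f = u :=
  ext_getElem? fun i => by
    rw [getElem?_filterMap_of_pairwise (pairwise_of_getElem?_bind_eq h), h]

end List

namespace Language

variable {α : Type}

theorem isRegular_of_leftQuotient_eq {β : Type*} [Finite β] {L : Language α}
    (φ : List α → β) (F : β → Language α) (h : ∀ x, L.leftQuotient x = F (φ x)) :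
    L.IsRegular :=
  .of_finite_range_leftQuotient <| (Set.finite_range F).subset <| by
    rintro _ ⟨x, rfl⟩
    exact ⟨φ x, (h x).symm⟩

theorem isRegular_setOf_pairwise_and_forall_mem [Finite α] (r : α → α → Prop)
    (p : α → Prop) : IsRegular {w : List α | w.Pairwise r ∧ ∀ a ∈ w, p a} := by
  refine isRegular_of_leftQuotient_eq (fun x => (x.Pairwise r ∧ ∀ a ∈ x, p a, {a | a ∈ x}))
    (fun s => {y | s.1 ∧ (y.Pairwise r ∧ ∀ b ∈ y, p b) ∧ ∀ a ∈ s.2, ∀ b ∈ y, r a b})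
    fun x => Set.ext fun y => ?_
  change (x ++ y).Pairwise r ∧ (∀ a ∈ x ++ y, p a) ↔ _
  rw [List.pairwise_append, List.forall_mem_append]
  exact ⟨fun ⟨⟨hx, hy, hxy⟩, px, py⟩ => ⟨⟨hx, px⟩, ⟨hy, py⟩, hxy⟩,
    fun ⟨⟨hx, px⟩, ⟨hy, py⟩, hxy⟩ => ⟨⟨hx, hy, hxy⟩, px, py⟩⟩

theorem isRegular_setOf_forall_mem [Finite α] (p : α → Prop) :
    IsRegular {w : List α | ∀ a ∈ w, p a} := by
  have h := isRegular_setOf_pairwise_and_forall_mem (fun _ _ => True) p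
  rwa [show {w : List α | w.Pairwise (fun _ _ => True) ∧ ∀ a ∈ w, p a} = {w | ∀ a ∈ w, p a} from
    Set.ext fun _ => and_iff_right (List.pairwise_of_forall fun _ _ => trivial)] at h

end Language

section Convolution

variable {A B : Type}

def convLetter : Option A × Option B → Option (Option A × Option B)
  | (none, none) => none
  | p => some p

theorem convLetter_bind_fst (p : Option A × Option B) : (convLetter p).bind Prod.fst = p.1 := by
  rcases p with ⟨_ | _, _ | _⟩ <;> rfl

theorem convLetter_bind_snd (p : Option A × Option B) : (convLetter p).bind Prod.snd = p.2 := by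
  rcases p with ⟨_ | _, _ | _⟩ <;> rfl

theorem convLetter_eq_some_of_ne {p : Option A × Option B} (hp : p ≠ (none, none)) :
    convLetter p = some p := by
  rcases p with ⟨_ | _, _ | _⟩ <;> first | rfl | exact absurd rfl hp

theorem convLetter_ne_some_none (p : Option A × Option B) :
    convLetter p ≠ some (none, none) := by
  rcases p with ⟨_ | _, _ | _⟩ <;> simp [convLetter]

theorem getElem?_conv (u : List A) (v : List B) (i : ℕ) :
    (conv u v)[i]? = convLetter (u[i]?, v[i]?) := by
  unfold conv
  by_cases hi : i < max u.length v.length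
  · rw [List.getElem?_map, List.getElem?_range hi, Option.map_some]
    refine (convLetter_eq_some_of_ne ?_).symm
    rcases lt_max_iff.1 hi with h | h <;> simp [h]
  · rw [List.getElem?_map, List.getElem?_eq_none (by simpa using hi)]
    rw [not_lt, max_le_iff] at hi
    rw [List.getElem?_eq_none hi.1, List.getElem?_eq_none hi.2]
    rfl

theorem getElem?_conv_bind_fst (u : List A) (v : List B) (i : ℕ) :
    (conv u v)[i]?.bind Prod.fst = u[i]? := by
  rw [getElem?_conv, convLetter_bind_fst]

theorem getElem?_conv_bind_snd (u : List A) (v : List B) (i : ℕ) :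
    (conv u v)[i]?.bind Prod.snd = v[i]? := by
  rw [getElem?_conv, convLetter_bind_snd]

theorem filterMap_fst_conv (u : List A) (v : List B) : (conv u v).filterMap Prod.fst = u :=
  List.filterMap_eq_of_getElem?_bind_eq (getElem?_conv_bind_fst u v)

theorem filterMap_snd_conv (u : List A) (v : List B) : (conv u v).filterMap Prod.snd = v :=
  List.filterMap_eq_of_getElem?_bind_eq (getElem?_conv_bind_snd u v)

theorem conv_inj {u u' : List A} {v v' : List B} :
    conv u v = conv u' v' ↔ u = u' ∧ v = v' :=
  ⟨fun h => ⟨by rw [← filterMap_fst_conv u v, h, filterMap_fst_conv],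
    by rw [← filterMap_snd_conv u v, h, filterMap_snd_conv]⟩, fun ⟨hu, hv⟩ => hu ▸ hv ▸ rfl⟩

theorem map_conv {A' B' : Type} (f : A → A') (g : B → B') (u : List A) (v : List B) :
    (conv u v).map (Prod.map (Option.map f) (Option.map g)) = conv (u.map f) (v.map g) := by
  refine List.ext_getElem? fun i => ?_
  rw [List.getElem?_map, getElem?_conv, getElem?_conv, List.getElem?_map, List.getElem?_map]
  rcases u[i]? with _ | _ <;> rcases v[i]? with _ | _ <;> rfl

theorem map_swap_conv (u : List A) (v : List B) : (conv u v).map Prod.swap = conv v u := by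
  refine List.ext_getElem? fun i => ?_
  rw [List.getElem?_map, getElem?_conv, getElem?_conv]
  rcases u[i]? with _ | _ <;> rcases v[i]? with _ | _ <;> rfl

def convWords (A B : Type) : Language (Option A × Option B) :=
  {w | ∃ u v, w = conv u v}

theorem mem_convWords_iff {w : List (Option A × Option B)} :
    w ∈ convWords A B ↔
      w.Pairwise (fun d e => (e.1.isSome → d.1.isSome) ∧ (e.2.isSome → d.2.isSome)) ∧
        ∀ d ∈ w, d ≠ (none, none) := by
  constructor
  · rintro ⟨u, v, rfl⟩
    refine ⟨(List.pairwise_of_getElem?_bind_eq (getElem?_conv_bind_fst u v)).and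
      (List.pairwise_of_getElem?_bind_eq (getElem?_conv_bind_snd u v)), fun d hd hnone => ?_⟩
    obtain ⟨i, hi⟩ := List.mem_iff_getElem?.1 hd
    rw [getElem?_conv, hnone] at hi
    exact convLetter_ne_some_none _ hi
  · rintro ⟨hw, hne⟩
    refine ⟨w.filterMap Prod.fst, w.filterMap Prod.snd, List.ext_getElem? fun i => ?_⟩
    rw [getElem?_conv, List.getElem?_filterMap_of_pairwise (hw.imp (·.1)),
      List.getElem?_filterMap_of_pairwise (hw.imp (·.2))]
    cases hi : w[i]? with
    | none => rfl
    | some d => exact (convLetter_eq_some_of_ne (hne d (List.mem_of_getElem? hi))).symm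

theorem isRegular_convWords [Finite A] [Finite B] : (convWords A B).IsRegular := by
  rw [show convWords A B = _ from Set.ext fun _ => mem_convWords_iff]
  exact Language.isRegular_setOf_pairwise_and_forall_mem _ _

theorem convLang_eq (L₁ : Language A) (L₂ : Language B) :
    convLang L₁ L₂ =
      {w | w.filterMap Prod.fst ∈ L₁} ⊓ {w | w.filterMap Prod.snd ∈ L₂} ⊓ convWords A B := by
  refine Set.ext fun w => ⟨?_, ?_⟩
  · rintro ⟨u, hu, v, hv, rfl⟩
    refine ⟨⟨?_, ?_⟩, u, v, rfl⟩ <;>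
      simpa only [Set.mem_ofPred_eq, filterMap_fst_conv, filterMap_snd_conv]
  · rintro ⟨⟨hu, hv⟩, u, v, rfl⟩
    simp only [Set.mem_ofPred_eq, filterMap_fst_conv, filterMap_snd_conv] at hu hv
    exact ⟨u, hu, v, hv, rfl⟩

def fstTracks (d : Option (Option A × Option B) × Option (Option A × Option B)) :
    Option (Option A × Option A) :=
  convLetter (d.1.bind Prod.fst, d.2.bind Prod.fst)

theorem filterMap_fstTracks_conv_conv (u₁ u₂ : List A) (v₁ v₂ : List B) :
    (conv (conv u₁ v₁) (conv u₂ v₂)).filterMap fstTracks = conv u₁ u₂ := by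
  have hletter : ∀ p : Option (Option A × Option B) × Option (Option A × Option B),
      (convLetter p).bind fstTracks = convLetter (p.1.bind Prod.fst, p.2.bind Prod.fst) := by
    rintro ⟨_ | _, _ | _⟩ <;> rfl
  refine List.filterMap_eq_of_getElem?_bind_eq fun i => ?_
  rw [getElem?_conv, hletter, getElem?_conv_bind_fst, getElem?_conv_bind_fst, getElem?_conv]

theorem forall_mem_conv_conv_snd_eq_iff (u₁ u₂ : List A) (v₁ v₂ : List B) :
    (∀ d ∈ conv (conv u₁ v₁) (conv u₂ v₂), d.1.bind Prod.snd = d.2.bind Prod.snd) ↔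
      v₁ = v₂ := by
  set w := conv (conv u₁ v₁) (conv u₂ v₂)
  have h₁ (i : ℕ) : w[i]?.bind (fun d => d.1.bind Prod.snd) = v₁[i]? := by
    rw [← Option.bind_assoc, getElem?_conv_bind_fst, getElem?_conv_bind_snd]
  have h₂ (i : ℕ) : w[i]?.bind (fun d => d.2.bind Prod.snd) = v₂[i]? := by
    rw [← Option.bind_assoc, getElem?_conv_bind_snd, getElem?_conv_bind_snd]
  constructor
  · refine fun h => List.ext_getElem? fun i => ?_
    rw [← h₁, ← h₂]
    cases hi : w[i]? with
    | none => rfl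
    | some d => exact h d (List.mem_of_getElem? hi)
  · rintro rfl d hd
    obtain ⟨i, hi⟩ := List.mem_iff_getElem?.1 hd
    simpa [hi] using (h₁ i).trans (h₂ i).symm

def swapTracks : Option (Option A × Option B) × Option (Option A × Option B) →
    Option (Option B × Option A) × Option (Option B × Option A) :=
  Prod.map (Option.map Prod.swap) (Option.map Prod.swap)

theorem swapTracks_injective : Function.Injective (swapTracks (A := A) (B := B)) :=
  (Option.map_injective Prod.swap_injective).prodMap (Option.map_injective Prod.swap_injective)

theorem map_swapTracks_conv_conv (u₁ u₂ : List A) (v₁ v₂ : List B) :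
    (conv (conv u₁ v₁) (conv u₂ v₂)).map swapTracks = conv (conv v₁ u₁) (conv v₂ u₂) := by
  rw [swapTracks, map_conv, map_swap_conv, map_swap_conv]

end Convolution

section ClosureProperties

variable {C : LangClass} {α β : Type} [Fintype α] [Fintype β]

theorem setOf_filterMap_mem_mem (hInv : ClosedUnderInvHom C) {L : Language β} (hL : L ∈ C β)
    (f : α → Option β) : {w : List α | w.filterMap f ∈ L} ∈ C α := by
  have h := hInv α β L hL fun a => (f a).toList
  simp only [homPreimage, ← List.flatMap_def, ← List.filterMap_eq_flatMap_toList] at h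
  exact h

theorem setOf_map_mem_mem (hInv : ClosedUnderInvHom C) {L : Language β} (hL : L ∈ C β)
    (f : α → β) : {w : List α | w.map f ∈ L} ∈ C α := by
  simpa only [List.filterMap_eq_map] using setOf_filterMap_mem_mem hInv hL (some ∘ f)

theorem convLang_mem (hInterReg : ClosedUnderInterReg C) (hInter : ClosedUnderInter C)
    (hInv : ClosedUnderInvHom C) {L₁ : Language α} {L₂ : Language β} (h₁ : L₁ ∈ C α)
    (h₂ : L₂ ∈ C β) : convLang L₁ L₂ ∈ C (Option α × Option β) := by
  rw [convLang_eq]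
  exact hInterReg _ _ (hInter _ _ (setOf_filterMap_mem_mem hInv h₁ _) _
    (setOf_filterMap_mem_mem hInv h₂ _)) _ isRegular_convWords

end ClosureProperties

section DirectProduct

variable {G H Λ Γ : Type}

def convNF (nfG : List Λ → G) (nfH : List Γ → H) (w : List (Option Λ × Option Γ)) : G × H :=
  (nfG (w.filterMap Prod.fst), nfH (w.filterMap Prod.snd))

@[simp]
theorem convNF_conv (nfG : List Λ → G) (nfH : List Γ → H) (u : List Λ) (v : List Γ) :
    convNF nfG nfH (conv u v) = (nfG u, nfH v) := by
  rw [convNF, filterMap_fst_conv, filterMap_snd_conv]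

variable {LG : Language Λ} {LH : Language Γ} {nfG : List Λ → G} {nfH : List Γ → H}

theorem bijOn_convNF (hG : Set.BijOn nfG LG Set.univ) (hH : Set.BijOn nfH LH Set.univ) :
    Set.BijOn (convNF nfG nfH) (convLang LG LH) Set.univ := by
  refine ⟨Set.mapsTo_univ _ _, ?_, ?_⟩
  · rintro _ ⟨u₁, hu₁, v₁, hv₁, rfl⟩ _ ⟨u₂, hu₂, v₂, hv₂, rfl⟩ h
    simp only [convNF_conv, Prod.mk.injEq] at h
    rw [hG.injOn hu₁ hu₂ h.1, hH.injOn hv₁ hv₂ h.2]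
  · rintro ⟨g, h⟩ -
    obtain ⟨u, hu, rfl⟩ := hG.surjOn (Set.mem_univ g)
    obtain ⟨v, hv, rfl⟩ := hH.surjOn (Set.mem_univ h)
    exact ⟨conv u v, ⟨u, hu, v, hv, rfl⟩, convNF_conv _ _ u v⟩

variable [Group G] [Group H]

theorem mult_convNF_mk_one (hH : Set.InjOn nfH LH) (x : G) :
    Mult (convNF nfG nfH) (convLang LG LH) (x, 1) =
      {w | w.filterMap Prod.fst ∈ convLang LG LH} ⊓
        {w | w.filterMap Prod.snd ∈ convLang LG LH} ⊓
        {w | w.filterMap fstTracks ∈ Mult nfG LG x} ⊓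
        (convWords _ _ ⊓ {w | ∀ d ∈ w, d.1.bind Prod.snd = d.2.bind Prod.snd}) := by
  refine Set.ext fun w => ⟨?_, ?_⟩
  · rintro ⟨_, ⟨u₁, hu₁, v₁, hv₁, rfl⟩, _, ⟨u₂, hu₂, v₂, hv₂, rfl⟩, hmul, rfl⟩
    simp only [convNF_conv, Prod.mk_mul_mk, mul_one, Prod.mk.injEq] at hmul
    obtain rfl := hH hv₁ hv₂ hmul.2
    refine ⟨⟨⟨?_, ?_⟩, ?_⟩, ⟨_, _, rfl⟩, (forall_mem_conv_conv_snd_eq_iff ..).2 rfl⟩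
    · simpa only [Set.mem_ofPred_eq, filterMap_fst_conv] using ⟨u₁, hu₁, v₁, hv₁, rfl⟩
    · simpa only [Set.mem_ofPred_eq, filterMap_snd_conv] using ⟨u₂, hu₂, v₁, hv₁, rfl⟩
    · simpa only [Set.mem_ofPred_eq, filterMap_fstTracks_conv_conv]
        using ⟨u₁, hu₁, u₂, hu₂, hmul.1, rfl⟩
  · rintro ⟨⟨⟨hp, hq⟩, hx⟩, ⟨p, q, rfl⟩, hagree⟩
    simp only [Set.mem_ofPred_eq, filterMap_fst_conv, filterMap_snd_conv] at hp hq
    obtain ⟨u₁, -, v₁, hv₁, rfl⟩ := hp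
    obtain ⟨u₂, -, v₂, -, rfl⟩ := hq
    obtain rfl := (forall_mem_conv_conv_snd_eq_iff ..).1 hagree
    simp only [Set.mem_ofPred_eq, filterMap_fstTracks_conv_conv] at hx
    obtain ⟨_, hu₁, _, hu₂, hmul, huu⟩ := hx
    obtain ⟨rfl, rfl⟩ := conv_inj.1 huu
    exact ⟨_, ⟨u₁, hu₁, v₁, hv₁, rfl⟩, _, ⟨u₂, hu₂, v₁, hv₁, rfl⟩, by simp [hmul], rfl⟩

theorem mult_convNF_mk_one_mem {C : LangClass} (hInterReg : ClosedUnderInterReg C)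
    (hInter : ClosedUnderInter C) (hInv : ClosedUnderInvHom C) [Fintype Λ] [Fintype Γ]
    (hH : Set.InjOn nfH LH) (hconv : convLang LG LH ∈ C _) {x : G}
    (hx : Mult nfG LG x ∈ C _) : Mult (convNF nfG nfH) (convLang LG LH) (x, 1) ∈ C _ := by
  rw [mult_convNF_mk_one hH]
  exact hInterReg _ _ (hInter _ _ (hInter _ _ (setOf_filterMap_mem_mem hInv hconv _) _
    (setOf_filterMap_mem_mem hInv hconv _)) _ (setOf_filterMap_mem_mem hInv hx _)) _
    (isRegular_convWords.inf (Language.isRegular_setOf_forall_mem _))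

theorem mult_convNF_eq_swap (g : G) (h : H) :
    Mult (convNF nfG nfH) (convLang LG LH) (g, h) =
      {w | w.map swapTracks ∈ Mult (convNF nfH nfG) (convLang LH LG) (h, g)} := by
  refine Set.ext fun w => ⟨?_, ?_⟩
  · rintro ⟨_, ⟨u₁, hu₁, v₁, hv₁, rfl⟩, _, ⟨u₂, hu₂, v₂, hv₂, rfl⟩, hmul, rfl⟩
    simp only [convNF_conv, Prod.mk_mul_mk, Prod.mk.injEq] at hmul
    exact ⟨_, ⟨v₁, hv₁, u₁, hu₁, rfl⟩, _, ⟨v₂, hv₂, u₂, hu₂, rfl⟩,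
      by simp [hmul], map_swapTracks_conv_conv ..⟩
  · rintro ⟨_, ⟨v₁, hv₁, u₁, hu₁, rfl⟩, _, ⟨v₂, hv₂, u₂, hu₂, rfl⟩, hmul, hw⟩
    rw [← map_swapTracks_conv_conv u₁ u₂] at hw
    obtain rfl := List.map_injective_iff.2 swapTracks_injective hw
    simp only [convNF_conv, Prod.mk_mul_mk, Prod.mk.injEq] at hmul
    exact ⟨_, ⟨u₁, hu₁, v₁, hv₁, rfl⟩, _, ⟨u₂, hu₂, v₂, hv₂, rfl⟩, by simp [hmul], rfl⟩

end DirectProduct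

theorem direct_product_graph_automatic_general (C : LangClass)
    (hInterReg : ClosedUnderInterReg C) (hInter : ClosedUnderInter C)
    (hInv : ClosedUnderInvHom C)
    {G H : Type} [Group G] [Group H] (X : Set G) (Y : Set H)
    {Λ Γ : Type} [Fintype Λ] [Fintype Γ]
    (LG : Language Λ) (nfG : List Λ → G) (LH : Language Γ) (nfH : List Γ → H)
    (hG : CGraphAutoWith C X LG nfG) (hH : CGraphAutoWith C Y LH nfH) :
    ∃ nf : List (Option Λ × Option Γ) → G × H,
      (∀ u ∈ LG, ∀ v ∈ LH, nf (conv u v) = (nfG u, nfH v)) ∧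
      CGraphAutoWith C
        ((fun x => (x, (1 : H))) '' X ∪ (fun y => ((1 : G), y)) '' Y)
        (convLang LG LH) nf := by
  obtain ⟨hbijG, hLG, hmultG⟩ := hG
  obtain ⟨hbijH, hLH, hmultH⟩ := hH
  refine ⟨convNF nfG nfH, fun u _ v _ => convNF_conv nfG nfH u v, bijOn_convNF hbijG hbijH,
    convLang_mem hInterReg hInter hInv hLG hLH, ?_⟩
  rintro _ (⟨x, hx, rfl⟩ | ⟨y, hy, rfl⟩)
  · exact mult_convNF_mk_one_mem hInterReg hInter hInv hbijH.injOn
      (convLang_mem hInterReg hInter hInv hLG hLH) (hmultG x hx)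
  · rw [mult_convNF_eq_swap]
    exact setOf_map_mem_mem hInv (mult_convNF_mk_one_mem hInterReg hInter hInv hbijG.injOn
      (convLang_mem hInterReg hInter hInv hLH hLG) (hmultH y hy)) _

/-- **Direct product.** Let `C` be a class of formal languages closed under
intersection with regular languages, finite intersection and inverse homomorphism. If
`(G,X,Λ)` and `(H,Y,Γ)` are `C`-graph automatic, then `G × H` is `C`-graph automatic with
respect to the generating set `Z = X × {1} ∪ {1} × Y` and the alphabet
`(Λ∪{⋄}) × (Γ∪{⋄})`, with normal form language `⊗(L_G, L_H)`. -/
theorem direct_product_graph_automatic (C : LangClass)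
    (hInterReg : ClosedUnderInterReg C) (hInter : ClosedUnderInter C)
    (hInv : ClosedUnderInvHom C)
    {G H : Type} [Group G] [Group H] (X : Set G) (Y : Set H)
    (hsymX : ∀ x ∈ X, x⁻¹ ∈ X) (hgenX : Subgroup.closure X = ⊤)
    (hsymY : ∀ y ∈ Y, y⁻¹ ∈ Y) (hgenY : Subgroup.closure Y = ⊤)
    {Λ Γ : Type} [Fintype Λ] [Fintype Γ]
    (LG : Language Λ) (nfG : List Λ → G) (LH : Language Γ) (nfH : List Γ → H)
    (hG : CGraphAutoWith C X LG nfG) (hH : CGraphAutoWith C Y LH nfH) :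
    ∃ nf : List (Option Λ × Option Γ) → G × H,
      (∀ u ∈ LG, ∀ v ∈ LH, nf (conv u v) = (nfG u, nfH v)) ∧
      CGraphAutoWith C
        ((fun x => (x, (1 : H))) '' X ∪ (fun y => ((1 : G), y)) '' Y)
        (convLang LG LH) nf :=
  direct_product_graph_automatic_general C hInterReg hInter hInv X Y LG nfG LH nfH hG hH
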